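/- Diagonal supermartingale construction: Let M be a finitely-branching MDP with absorbing terminal state ⊥ that is almost surely terminating from σ, suppose Reach(σ) is infinite, and let e : ℕ → Reach(σ) be a bijection with e(0) = ⊥. For i, n ∈ ℕ let R(i, n) be the supremum over all schedulers 𝔰 of ℙ_{𝔰,e(i)}(the run visits some state e(m) with m ≥ n). Then there exists a strictly increasing sequence (n_j)_{j∈ℕ} of positive integers with R(i, n_j) ≤ 2^{−j} for all i ≤ j; and for any such sequence, the function V : Reach(σ) → ℝ given by V(s) = Σ_{j∈ℕ} R(e⁻¹(s), n_j) is well defined (the series converges for every s), satisfies V(⊥) = 0, is a supermartingale function on Reach(σ), and every sublevel set {s ∈ Reach(σ) : V(s) ≤ r} with r ∈ ℝ is finite. -/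

import Mathlib

open scoped ENNReal Classical

/-- A finitely-branching MDP on a state space `S`: each state has a nonempty finite
set of available actions, each a finitely-supported PMF on `S`. -/
structure MDP (S : Type) where
  act : S → Finset (PMF S)
  act_nonempty : ∀ s, (act s).Nonempty
  act_finSupp : ∀ s, ∀ μ ∈ act s, (μ : PMF S).support.Finite

/-- A scheduler maps every history `(s₀, …, sₙ)` (given as the list of earlier
states `s₀, …, sₙ₋₁` together with the current state `sₙ`) to an available action. -/
structure Scheduler {S : Type} (M : MDP S) where
  choose : List S → S → PMF S
  choose_mem : ∀ hist s, choose hist s ∈ M.act s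

namespace MDP

variable {S : Type}

/-- Reachability: `s'` is reachable from `σ` via a finite path each of whose steps
lies in the support of some available action. -/
inductive Reach (M : MDP S) (σ : S) : S → Prop
  | refl : Reach M σ σ
  | step {s s' : S} (μ : PMF S) : Reach M σ s → μ ∈ M.act s → s' ∈ μ.support → Reach M σ s'

/-- Probability that the run (currently at `s`, with past history `hist`) visits the
set `T` within the next `k` steps, under scheduler `𝔰`. -/
noncomputable def hitProbAux (M : MDP S) (𝔰 : Scheduler M) (T : Set S) :
    ℕ → List S → S → ℝ≥0∞
  | 0, _, s => if s ∈ T then 1 else 0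
  | k + 1, hist, s =>
      if s ∈ T then 1
      else ∑' s', (𝔰.choose hist s) s' * hitProbAux M 𝔰 T k (hist ++ [s]) s'

/-- Probability that the run started at `σ` visits `T` within the first `k` steps. -/
noncomputable def hitProbWithin (M : MDP S) (𝔰 : Scheduler M) (σ : S) (T : Set S)
    (k : ℕ) : ℝ≥0∞ :=
  hitProbAux M 𝔰 T k [] σ

/-- Probability that the run started at `σ` ever visits `T`, under scheduler `𝔰`. -/
noncomputable def hitProb (M : MDP S) (𝔰 : Scheduler M) (σ : S) (T : Set S) : ℝ≥0∞ :=
  ⨆ k, hitProbWithin M 𝔰 σ T k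

/-- The terminal state `term` is absorbing: the only action there is the Dirac PMF. -/
def Absorbing (M : MDP S) (term : S) : Prop :=
  M.act term = {PMF.pure term}

/-- Termination probability: infimum over schedulers of the probability of visiting
the terminal state. -/
noncomputable def PrTerm (M : MDP S) (term σ : S) : ℝ≥0∞ :=
  ⨅ 𝔰 : Scheduler M, hitProb M 𝔰 σ {term}

/-- Almost-sure termination from `σ`. -/
def AST (M : MDP S) (term σ : S) : Prop := PrTerm M term σ = 1

/-- Mass a PMF assigns to a set. -/
noncomputable def mass (μ : PMF S) (A : Set S) : ℝ≥0∞ := ∑' a : A, μ a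

/-- Expected value of a real-valued function under a (finitely supported) PMF. -/
noncomputable def expect (μ : PMF S) (V : S → ℝ) : ℝ := ∑' s, (μ s).toReal * V s

/-- `V` is a supermartingale function on the states reachable from `σ`. -/
def SupermartingaleOn (M : MDP S) (σ : S) (V : S → ℝ) : Prop :=
  ∀ s, M.Reach σ s → ∀ μ ∈ M.act s, expect μ V ≤ V s

/-- `(Ψ, p)` is a stochastic invariant for initial state `σ`: under every scheduler the
probability that the run ever leaves `Ψ` is at most `p`. -/
def StochasticInvariant (M : MDP S) (σ : S) (Ψ : Set S) (p : ℝ) : Prop :=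
  ⨆ 𝔰 : Scheduler M, hitProb M 𝔰 σ Ψᶜ ≤ ENNReal.ofReal p

end MDP

/-- `R i n`: the supremum over schedulers of the probability that a run started at `e i`
visits some state `e m` with `m ≥ n`. -/
noncomputable def MDP.supReachFar {S : Type} (M : MDP S) (e : ℕ → S) (i n : ℕ) : ℝ≥0∞ :=
  ⨆ 𝔰 : Scheduler M, M.hitProb 𝔰 (e i) {s | ∃ m, n ≤ m ∧ e m = s}


/-!
Almost-sure termination propagates from `σ` to every reachable state. Since the MDP is finitely
branching, the worst-case probability of reaching `⊥` is already approached at bounded horizons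
(a greedy memoryless scheduler realizes the limit of the bounded-horizon values), so from `e i`
every scheduler terminates within some `k` steps with probability `≥ 1 - ε`. Only finitely many
states are reachable within `k` steps and `⊥` is absorbing, so visiting some `e m` with `m` large
has probability `≤ ε` under every scheduler: `R(i, n) → 0`, and a diagonal choice gives `(n_j)`.
Each `R(·, n)` is an optimal reachability value, hence satisfies the Bellman inequality, and so
does their sum `V`. Finally `R(i, n) = 1` for `n ≤ i`, so `V(e i)` is large for large `i`.
-/

open Filter Topology Function

namespace PMF

variable {α : Type*} (μ : PMF α)

theorem tsum_mul_eq_sum_of_support_finite (hμ : μ.support.Finite) (f : α → ℝ≥0∞) :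
    ∑' a, μ a * f a = ∑ a ∈ hμ.toFinset, μ a * f a :=
  tsum_eq_sum fun a ha => by
    rw [(μ.apply_eq_zero_iff a).2 (by simpa using ha), zero_mul]

theorem tsum_mul_iSup_of_monotone (hμ : μ.support.Finite) {f : α → ℕ → ℝ≥0∞}
    (hf : ∀ a, Monotone (f a)) : ∑' a, μ a * ⨆ n, f a n = ⨆ n, ∑' a, μ a * f a n := by
  simp_rw [μ.tsum_mul_eq_sum_of_support_finite hμ, ENNReal.mul_iSup]
  exact ENNReal.finsetSum_iSup_of_monotone fun a _ _ h => mul_le_mul_right (hf a h) _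

theorem tsum_mul_le_one {f : α → ℝ≥0∞} (hf : ∀ a ∈ μ.support, f a ≤ 1) :
    ∑' a, μ a * f a ≤ 1 :=
  calc ∑' a, μ a * f a ≤ ∑' a, μ a := ENNReal.tsum_le_tsum fun a => by
        by_cases ha : a ∈ μ.support
        · exact mul_le_of_le_one_right' (hf a ha)
        · simp [(μ.apply_eq_zero_iff a).2 ha]
    _ = 1 := μ.tsum_coe

theorem eq_one_of_tsum_mul_eq_one {f : α → ℝ≥0∞} (hf : ∀ a, f a ≤ 1)
    (h : ∑' a, μ a * f a = 1) {a : α} (ha : a ∈ μ.support) : f a = 1 := by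
  by_contra hne
  have hlt : ∑' b, μ b * f b < ∑' b, μ b := by
    refine ENNReal.tsum_lt_tsum (i := a) (h ▸ ENNReal.one_ne_top)
      (fun b => mul_le_of_le_one_right' (hf b)) ?_
    simpa using ENNReal.mul_lt_mul_right ((μ.mem_support_iff a).1 ha) (μ.apply_ne_top a)
      ((hf a).lt_of_ne hne)
  rw [h, μ.tsum_coe] at hlt
  exact hlt.false

end PMF

theorem ENNReal.tsum_ne_top_of_le_two_inv_pow {f : ℕ → ℝ≥0∞} {i : ℕ} (h₁ : ∀ j, f j ≤ 1)
    (h₂ : ∀ j, i ≤ j → f j ≤ 2⁻¹ ^ j) : ∑' j, f j ≠ ⊤ := by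
  rw [← ENNReal.summable.sum_add_tsum_nat_add' (k := i)]
  refine ENNReal.add_ne_top.2 ⟨ENNReal.sum_ne_top.2 fun j _ => ne_top_of_le_ne_top
    ENNReal.one_ne_top (h₁ j), ne_top_of_le_ne_top (b := 2) ENNReal.ofNat_ne_top ?_⟩
  calc ∑' j, f (j + i) ≤ ∑' j, (2⁻¹ : ℝ≥0∞) ^ j := ENNReal.tsum_le_tsum fun j =>
        (h₂ _ (Nat.le_add_left i j)).trans
          (pow_le_pow_right_of_le_one' (ENNReal.inv_le_one.2 one_le_two) (Nat.le_add_right j i))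
    _ = 2 := ENNReal.tsum_geometric_two

theorem exists_strictMono_pos_forall_le_two_inv_pow {R : ℕ → ℕ → ℝ≥0∞}
    (hR : ∀ i, Tendsto (R i) atTop (𝓝 0)) :
    ∃ φ : ℕ → ℕ, StrictMono φ ∧ (∀ j, 0 < φ j) ∧ ∀ j, ∀ i ≤ j, R i (φ j) ≤ 2⁻¹ ^ j := by
  have h : ∀ j, ∀ᶠ n in atTop, 0 < n ∧ ∀ i ∈ Set.Iic j, R i n ≤ 2⁻¹ ^ j := fun j =>
    (eventually_gt_atTop 0).and <| (eventually_all_finite (Set.finite_Iic j)).2 fun i _ =>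
      (hR i).eventually (ge_mem_nhds (ENNReal.pow_pos (by norm_num) j))
  obtain ⟨φ, hφ, hP⟩ := extraction_forall_of_eventually h
  exact ⟨φ, hφ, fun j => (hP j).1, fun j => (hP j).2⟩

/-- A history `s₀ :: hist` with current state `t` has first successor `hist.headD t`: the combined
scheduler plays `μ` at `s`, and then the scheduler `f s₁` on the run from that successor `s₁`. -/
noncomputable def Scheduler.combine {S : Type} {M : MDP S} {s : S} {μ : PMF S}
    (hμ : μ ∈ M.act s) (f : S → Scheduler M) : Scheduler M where
  choose
    | [], t => if t = s then μ else (f t).choose [] t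
    | _ :: hist, t => (f (hist.headD t)).choose hist t
  choose_mem
    | [], t => by
      dsimp only
      split_ifs with h
      · exact h ▸ hμ
      · exact (f t).choose_mem [] t
    | _ :: hist, t => (f _).choose_mem hist t

def Scheduler.shift {S : Type} {M : MDP S} (𝔰 : Scheduler M) (pre : List S) : Scheduler M :=
  ⟨fun hist s => 𝔰.choose (pre ++ hist) s, fun _ s => 𝔰.choose_mem _ s⟩

namespace MDP

variable {S : Type} {M : MDP S} {μ : PMF S} {T : Set S} {s : S}

instance : Nonempty (Scheduler M) :=
  ⟨⟨fun _ s => (M.act_nonempty s).choose, fun _ s => (M.act_nonempty s).choose_spec⟩⟩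

section HitProb

variable {𝔰 : Scheduler M} {k : ℕ} {hist : List S}

theorem hitProbAux_of_mem (h : s ∈ T) : hitProbAux M 𝔰 T k hist s = 1 := by
  cases k <;> simp [hitProbAux, h]

theorem hitProbAux_zero_of_notMem (h : s ∉ T) : hitProbAux M 𝔰 T 0 hist s = 0 := by
  simp [hitProbAux, h]

theorem hitProbAux_succ_of_notMem (h : s ∉ T) :
    hitProbAux M 𝔰 T (k + 1) hist s =
      ∑' s', 𝔰.choose hist s s' * hitProbAux M 𝔰 T k (hist ++ [s]) s' := by
  simp [hitProbAux, h]

theorem hitProbAux_le_one (𝔰 : Scheduler M) (T : Set S) (k : ℕ) :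
    ∀ hist s, hitProbAux M 𝔰 T k hist s ≤ 1 := by
  induction k with
  | zero => intro hist s; unfold hitProbAux; split <;> simp
  | succ k ih =>
    intro hist s
    by_cases h : s ∈ T
    · rw [hitProbAux_of_mem h]
    · rw [hitProbAux_succ_of_notMem h]
      exact PMF.tsum_mul_le_one _ fun s' _ => ih _ s'

theorem hitProbAux_le_succ (𝔰 : Scheduler M) (T : Set S) (k : ℕ) :
    ∀ hist s, hitProbAux M 𝔰 T k hist s ≤ hitProbAux M 𝔰 T (k + 1) hist s := by
  induction k with
  | zero =>
    intro hist s
    by_cases h : s ∈ T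
    · rw [hitProbAux_of_mem h, hitProbAux_of_mem h]
    · rw [hitProbAux_zero_of_notMem h]; exact zero_le
  | succ k ih =>
    intro hist s
    by_cases h : s ∈ T
    · rw [hitProbAux_of_mem h, hitProbAux_of_mem h]
    · rw [hitProbAux_succ_of_notMem h, hitProbAux_succ_of_notMem h]
      exact ENNReal.tsum_le_tsum fun s' => mul_le_mul_right (ih _ s') _

theorem hitProbWithin_mono (𝔰 : Scheduler M) (s : S) (T : Set S) :
    Monotone (hitProbWithin M 𝔰 s T) :=
  monotone_nat_of_le_succ fun k => hitProbAux_le_succ 𝔰 T k [] s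

theorem hitProb_le_one (𝔰 : Scheduler M) (s : S) (T : Set S) : hitProb M 𝔰 s T ≤ 1 :=
  iSup_le fun k => hitProbAux_le_one 𝔰 T k [] s

theorem hitProb_of_mem (𝔰 : Scheduler M) (h : s ∈ T) : hitProb M 𝔰 s T = 1 :=
  le_antisymm (hitProb_le_one 𝔰 s T)
    ((hitProbAux_of_mem h).ge.trans (le_iSup (hitProbWithin M 𝔰 s T) 0))

theorem hitProbAux_append (𝔰 : Scheduler M) (T : Set S) (pre : List S) (k : ℕ) :
    ∀ hist s, hitProbAux M 𝔰 T k (pre ++ hist) s = hitProbAux M (𝔰.shift pre) T k hist s := by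
  induction k with
  | zero => intro _ _; rfl
  | succ k ih =>
    intro hist s
    by_cases h : s ∈ T
    · rw [hitProbAux_of_mem h, hitProbAux_of_mem h]
    · rw [hitProbAux_succ_of_notMem h, hitProbAux_succ_of_notMem h]
      refine tsum_congr fun s' => ?_
      rw [List.append_assoc, ih]
      rfl

theorem hitProbAux_eq_hitProbWithin_shift (𝔰 : Scheduler M) (T : Set S) (k : ℕ)
    (hist : List S) (s : S) :
    hitProbAux M 𝔰 T k hist s = hitProbWithin M (𝔰.shift hist) s T k := by
  simpa [hitProbWithin] using hitProbAux_append 𝔰 T hist k [] s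

theorem Absorbing.choose_eq {term : S} (hterm : M.Absorbing term) (𝔰 : Scheduler M)
    (hist : List S) : 𝔰.choose hist term = PMF.pure term := by
  have h := 𝔰.choose_mem hist term
  rwa [hterm, Finset.mem_singleton] at h

theorem Absorbing.eq_of_mem_support {term : S} (hterm : M.Absorbing term)
    (hμ : μ ∈ M.act term) (hs : s ∈ μ.support) : s = term := by
  rw [hterm, Finset.mem_singleton] at hμ
  simpa [hμ] using hs

theorem hitProbAux_absorbing {term : S} (hterm : M.Absorbing term) (hT : term ∉ T)
    (𝔰 : Scheduler M) (k : ℕ) : ∀ hist, hitProbAux M 𝔰 T k hist term = 0 := by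
  induction k with
  | zero => intro _; exact hitProbAux_zero_of_notMem hT
  | succ k ih =>
    intro hist
    rw [hitProbAux_succ_of_notMem hT, hterm.choose_eq,
      tsum_eq_single term fun b hb => by simp [hb], ih, mul_zero]

theorem hitProb_absorbing {term : S} (hterm : M.Absorbing term) (hT : term ∉ T)
    (𝔰 : Scheduler M) : hitProb M 𝔰 term T = 0 :=
  ENNReal.iSup_eq_zero.2 fun k => hitProbAux_absorbing hterm hT 𝔰 k []

end HitProb

theorem hitProbAux_combine_cons (hμ : μ ∈ M.act s) (f : S → Scheduler M) (T : Set S) (s₀ : S)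
    (k : ℕ) :
    ∀ hist t, hitProbAux M (Scheduler.combine hμ f) T k (s₀ :: hist) t =
      hitProbAux M (f (hist.headD t)) T k hist t := by
  induction k with
  | zero => intro _ _; rfl
  | succ k ih =>
    intro hist t
    by_cases h : t ∈ T
    · rw [hitProbAux_of_mem h, hitProbAux_of_mem h]
    · rw [hitProbAux_succ_of_notMem h, hitProbAux_succ_of_notMem h]
      refine tsum_congr fun s' => ?_
      rw [List.cons_append, ih]
      cases hist <;> rfl

theorem hitProb_combine (hμ : μ ∈ M.act s) (f : S → Scheduler M) (hs : s ∉ T) :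
    hitProb M (Scheduler.combine hμ f) s T = ∑' s', μ s' * hitProb M (f s') s' T := by
  simp only [hitProb]
  rw [μ.tsum_mul_iSup_of_monotone (M.act_finSupp s μ hμ) fun s' => hitProbWithin_mono _ s' T,
    ← (hitProbWithin_mono _ s T).iSup_nat_add 1]
  refine iSup_congr fun k => ?_
  rw [hitProbWithin, hitProbAux_succ_of_notMem hs]
  refine tsum_congr fun s' => ?_
  rw [List.nil_append, hitProbAux_combine_cons]
  simp [Scheduler.combine, hitProbWithin]

noncomputable def maxHitProb (M : MDP S) (s : S) (T : Set S) : ℝ≥0∞ :=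
  ⨆ 𝔰 : Scheduler M, M.hitProb 𝔰 s T

theorem maxHitProb_le_one : M.maxHitProb s T ≤ 1 :=
  iSup_le fun 𝔰 => hitProb_le_one 𝔰 s T

theorem maxHitProb_of_mem (h : s ∈ T) : M.maxHitProb s T = 1 := by
  simp [maxHitProb, hitProb_of_mem _ h]

theorem tsum_mul_maxHitProb_le (hμ : μ ∈ M.act s) (T : Set S) :
    ∑' s', μ s' * M.maxHitProb s' T ≤ M.maxHitProb s T := by
  by_cases hs : s ∈ T
  · rw [maxHitProb_of_mem hs]
    exact μ.tsum_mul_le_one fun _ _ => maxHitProb_le_one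
  have hdir : ∀ f g : S → Scheduler M, ∃ h : S → Scheduler M, ∀ s',
      μ s' * hitProb M (f s') s' T ≤ μ s' * hitProb M (h s') s' T ∧
        μ s' * hitProb M (g s') s' T ≤ μ s' * hitProb M (h s') s' T := fun f g =>
    ⟨fun s' => if hitProb M (f s') s' T ≤ hitProb M (g s') s' T then g s' else f s', fun s' => by
      dsimp only
      split_ifs with h
      · exact ⟨mul_le_mul_right h _, le_rfl⟩
      · exact ⟨le_rfl, mul_le_mul_right (not_le.1 h).le _⟩⟩
  calc ∑' s', μ s' * M.maxHitProb s' T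
      = ⨆ f : S → Scheduler M, ∑' s', μ s' * hitProb M (f s') s' T := by
        simp_rw [μ.tsum_mul_eq_sum_of_support_finite (M.act_finSupp s μ hμ), maxHitProb,
          ENNReal.mul_iSup, ← ENNReal.finsetSum_iSup hdir]
        refine Finset.sum_congr rfl fun s' _ => le_antisymm
          (iSup_le fun 𝔰 => le_iSup_of_le (fun _ => 𝔰) le_rfl)
          (iSup_le fun f => le_iSup_of_le (f s') le_rfl)
    _ = ⨆ f, hitProb M (Scheduler.combine hμ f) s T := by simp_rw [hitProb_combine hμ _ hs]
    _ ≤ M.maxHitProb s T := iSup_le fun f => le_iSup (fun 𝔰 => hitProb M 𝔰 s T) _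

theorem ast_iff {term : S} : M.AST term s ↔ ∀ 𝔰 : Scheduler M, M.hitProb 𝔰 s {term} = 1 :=
  ⟨fun h 𝔰 => le_antisymm (hitProb_le_one 𝔰 s _) (h.symm.le.trans (iInf_le _ 𝔰)),
    fun h => by simp [AST, PrTerm, h]⟩

theorem hitProb_eq_one_of_mem_support (hs : s ∉ T) (h : ∀ 𝔰 : Scheduler M, hitProb M 𝔰 s T = 1)
    (hμ : μ ∈ M.act s) {s' : S} (hs' : s' ∈ μ.support) (𝔰 : Scheduler M) :
    hitProb M 𝔰 s' T = 1 :=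
  μ.eq_one_of_tsum_mul_eq_one (fun t => hitProb_le_one 𝔰 t T)
    ((hitProb_combine hμ (fun _ => 𝔰) hs).symm.trans (h _)) hs'

theorem AST.of_reach {term σ : S} (hAST : M.AST term σ) (hterm : M.Absorbing term)
    (hs : M.Reach σ s) : M.AST term s := by
  induction hs with
  | refl => exact hAST
  | @step t t' μ _ hμ ht' ih =>
    by_cases htt : t = term
    · subst htt
      rw [hterm.eq_of_mem_support hμ ht']
      exact ast_iff.2 fun 𝔰 => hitProb_of_mem 𝔰 rfl
    · exact ast_iff.2 (hitProb_eq_one_of_mem_support (by simpa using htt) (ast_iff.1 ih) hμ ht')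

noncomputable def infHitProbWithin (M : MDP S) (s : S) (T : Set S) (k : ℕ) : ℝ≥0∞ :=
  ⨅ 𝔰 : Scheduler M, M.hitProbWithin 𝔰 s T k

theorem infHitProbWithin_mono (s : S) (T : Set S) : Monotone (M.infHitProbWithin s T) :=
  fun _ _ hk => iInf_mono fun 𝔰 => hitProbWithin_mono 𝔰 s T hk

theorem infHitProbWithin_le_one (k : ℕ) : M.infHitProbWithin s T k ≤ 1 :=
  (iInf_le _ (Classical.arbitrary _)).trans (hitProbAux_le_one _ T k [] s)

theorem infHitProbWithin_of_mem (h : s ∈ T) (k : ℕ) : M.infHitProbWithin s T k = 1 := by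
  simp [infHitProbWithin, hitProbWithin, hitProbAux_of_mem h]

theorem tsum_mul_infHitProbWithin_le (𝔰 : Scheduler M) (hs : s ∉ T) (k : ℕ) :
    ∑' s', 𝔰.choose [] s s' * M.infHitProbWithin s' T k ≤ M.hitProbWithin 𝔰 s T (k + 1) := by
  rw [hitProbWithin, hitProbAux_succ_of_notMem hs]
  refine ENNReal.tsum_le_tsum fun s' => mul_le_mul_right ?_ _
  rw [hitProbAux_eq_hitProbWithin_shift]
  exact iInf_le _ _

/-- Otherwise, as there are finitely many actions and each has finite support, all actions beat
`⨆ k, infHitProbWithin s T k` at one common horizon `k`, and then so does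
`infHitProbWithin s T (k + 1)`. -/
theorem exists_mem_act_tsum_mul_le (s : S) (T : Set S) :
    ∃ μ ∈ M.act s, ∑' s', μ s' * ⨆ k, M.infHitProbWithin s' T k ≤
      ⨆ k, M.infHitProbWithin s T k := by
  by_cases hs : s ∈ T
  · obtain ⟨μ, hμ⟩ := M.act_nonempty s
    refine ⟨μ, hμ, ?_⟩
    simp only [infHitProbWithin_of_mem hs, iSup_const]
    exact μ.tsum_mul_le_one fun _ _ => iSup_le fun k => infHitProbWithin_le_one k
  by_contra! hlt
  have hev : ∀ᶠ k in atTop, ∀ μ ∈ M.act s,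
      ⨆ k, M.infHitProbWithin s T k < ∑' s', μ s' * M.infHitProbWithin s' T k := by
    refine (eventually_all_finset _).2 fun μ hμ => ?_
    have h := hlt μ hμ
    rw [μ.tsum_mul_iSup_of_monotone (M.act_finSupp s μ hμ) fun s' =>
      infHitProbWithin_mono (M := M) s' T] at h
    obtain ⟨k, hk⟩ := lt_iSup_iff.1 h
    exact eventually_atTop.2 ⟨k, fun k' hk' => hk.trans_le <| ENNReal.tsum_le_tsum fun s' =>
      mul_le_mul_right (infHitProbWithin_mono s' T hk') _⟩
  obtain ⟨k, hk⟩ := hev.exists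
  obtain ⟨μ₀, hμ₀, hmin⟩ := (M.act s).exists_min_image
    (fun μ => ∑' s', μ s' * M.infHitProbWithin s' T k) (M.act_nonempty s)
  have hle : ∑' s', μ₀ s' * M.infHitProbWithin s' T k ≤ M.infHitProbWithin s T (k + 1) :=
    le_iInf fun 𝔰 => (hmin _ (𝔰.choose_mem [] s)).trans (tsum_mul_infHitProbWithin_le 𝔰 hs k)
  exact (hk μ₀ hμ₀).not_ge (hle.trans (le_iSup (M.infHitProbWithin s T) (k + 1)))

noncomputable def greedyScheduler (M : MDP S) (T : Set S) : Scheduler M where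
  choose _ s := (exists_mem_act_tsum_mul_le (M := M) s T).choose
  choose_mem _ s := (exists_mem_act_tsum_mul_le s T).choose_spec.1

theorem hitProbAux_greedyScheduler_le (T : Set S) (k : ℕ) :
    ∀ hist s, hitProbAux M (greedyScheduler M T) T k hist s ≤ ⨆ k, M.infHitProbWithin s T k := by
  induction k with
  | zero =>
    intro hist s
    by_cases hs : s ∈ T
    · simp [infHitProbWithin_of_mem hs, hitProbAux_of_mem hs]
    · simp [hitProbAux_zero_of_notMem hs]
  | succ k ih =>
    intro hist s
    by_cases hs : s ∈ T
    · simp [infHitProbWithin_of_mem hs, hitProbAux_of_mem hs]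
    · rw [hitProbAux_succ_of_notMem hs]
      exact (ENNReal.tsum_le_tsum fun s' => mul_le_mul_right (ih _ s') _).trans
        (exists_mem_act_tsum_mul_le s T).choose_spec.2

theorem iInf_hitProb_eq_iSup_infHitProbWithin (s : S) (T : Set S) :
    ⨅ 𝔰 : Scheduler M, M.hitProb 𝔰 s T = ⨆ k, M.infHitProbWithin s T k :=
  le_antisymm
    ((iInf_le _ (greedyScheduler M T)).trans
      (iSup_le fun k => hitProbAux_greedyScheduler_le T k [] s))
    (iSup_iInf_le_iInf_iSup _)

theorem AST.iSup_infHitProbWithin_eq_one {term : S} (h : M.AST term s) :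
    ⨆ k, M.infHitProbWithin s {term} k = 1 :=
  (iInf_hitProb_eq_iSup_infHitProbWithin s {term}).symm.trans h

def reachWithin (M : MDP S) : ℕ → S → Set S
  | 0, s => {s}
  | k + 1, s => insert s (⋃ μ ∈ M.act s, ⋃ s' ∈ μ.support, M.reachWithin k s')

theorem reachWithin_finite : ∀ (k : ℕ) (s : S), (M.reachWithin k s).Finite
  | 0, s => Set.finite_singleton s
  | k + 1, s => ((M.act s).finite_toSet.biUnion fun μ hμ =>
      (M.act_finSupp s μ hμ).biUnion fun s' _ => reachWithin_finite k s').insert s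

theorem mem_reachWithin_self : ∀ k : ℕ, s ∈ M.reachWithin k s
  | 0 => rfl
  | _ + 1 => Set.mem_insert _ _

theorem reachWithin_subset_succ {k : ℕ} (hμ : μ ∈ M.act s) {s' : S} (hs' : s' ∈ μ.support) :
    M.reachWithin k s' ⊆ M.reachWithin (k + 1) s :=
  fun _ ht => Or.inr (Set.mem_iUnion₂.2 ⟨μ, hμ, Set.mem_iUnion₂.2 ⟨s', hs', ht⟩⟩)

/-- Hitting `T` and hitting the absorbing `term` within `k` steps are disjoint events when no
state of `T` is reachable within `k` steps. -/
theorem hitProbAux_add_hitProbAux_le_one {term : S} (hterm : M.Absorbing term)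
    (𝔰 : Scheduler M) (T : Set S) (m : ℕ) :
    ∀ k hist s, Disjoint (M.reachWithin k s) T →
      hitProbAux M 𝔰 T m hist s + hitProbAux M 𝔰 {term} k hist s ≤ 1 := by
  induction m with
  | zero =>
    intro k hist s hdisj
    rw [hitProbAux_zero_of_notMem (Set.disjoint_left.1 hdisj (mem_reachWithin_self k)),
      zero_add]
    exact hitProbAux_le_one 𝔰 _ k hist s
  | succ m ih =>
    intro k hist s hdisj
    have hsT : s ∉ T := Set.disjoint_left.1 hdisj (mem_reachWithin_self k)
    by_cases hst : s = term
    · subst hst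
      rw [hitProbAux_absorbing hterm hsT, zero_add]
      exact hitProbAux_le_one 𝔰 _ k hist s
    have hst' : s ∉ ({term} : Set S) := hst
    cases k with
    | zero =>
      rw [hitProbAux_zero_of_notMem hst', add_zero]
      exact hitProbAux_le_one 𝔰 T _ hist s
    | succ k =>
      rw [hitProbAux_succ_of_notMem hsT, hitProbAux_succ_of_notMem hst', ← ENNReal.tsum_add]
      simp_rw [← mul_add]
      exact PMF.tsum_mul_le_one _ fun s' hs' =>
        ih k _ s' (hdisj.mono_left (reachWithin_subset_succ (𝔰.choose_mem hist s) hs'))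

theorem hitProb_add_hitProbWithin_le_one {term : S} (hterm : M.Absorbing term)
    (𝔰 : Scheduler M) {k : ℕ} (hdisj : Disjoint (M.reachWithin k s) T) :
    M.hitProb 𝔰 s T + M.hitProbWithin 𝔰 s {term} k ≤ 1 := by
  rw [hitProb, ENNReal.iSup_add]
  exact iSup_le fun m => hitProbAux_add_hitProbAux_le_one hterm 𝔰 T m k [] s hdisj

theorem tendsto_maxHitProb_image_Ici_atTop_zero {term : S} (hterm : M.Absorbing term)
    (hs : M.AST term s) {e : ℕ → S} (he : Injective e) :
    Tendsto (fun n => M.maxHitProb s (e '' Set.Ici n)) atTop (𝓝 0) := by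
  refine ENNReal.tendsto_atTop_zero.2 fun ε hε => ?_
  obtain ⟨k, hk⟩ := lt_iSup_iff.1 <| (ENNReal.sub_lt_self ENNReal.one_ne_top one_ne_zero
    hε.ne').trans_eq hs.iSup_infHitProbWithin_eq_one.symm
  obtain ⟨N, hN⟩ := ((M.reachWithin_finite k s).preimage he.injOn).bddAbove
  refine ⟨N + 1, fun n hn => iSup_le fun 𝔰 => ?_⟩
  have hdisj : Disjoint (M.reachWithin k s) (e '' Set.Ici n) := by
    refine Set.disjoint_right.2 ?_
    rintro _ ⟨m, hm, rfl⟩ hmk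
    have : m ≤ N := hN hmk
    simp only [Set.mem_Ici] at hm
    omega
  calc M.hitProb 𝔰 s (e '' Set.Ici n) ≤ 1 - M.hitProbWithin 𝔰 s {term} k :=
        ENNReal.le_sub_of_add_le_right (ne_top_of_le_ne_top ENNReal.one_ne_top
          (hitProbAux_le_one _ _ _ _ _)) (hitProb_add_hitProbWithin_le_one hterm 𝔰 hdisj)
    _ ≤ 1 - (1 - ε) := tsub_le_tsub_left (hk.le.trans (iInf_le _ 𝔰)) 1
    _ ≤ ε := tsub_tsub_le

end MDP

namespace MDP

variable {S : Type} {M : MDP S} {e : ℕ → S} {nseq : ℕ → ℕ} {σ s : S}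

theorem supReachFar_eq_maxHitProb (e : ℕ → S) (i n : ℕ) :
    M.supReachFar e i n = M.maxHitProb (e i) (e '' Set.Ici n) :=
  rfl

theorem supReachFar_le_one (e : ℕ → S) (i n : ℕ) : M.supReachFar e i n ≤ 1 :=
  maxHitProb_le_one

theorem supReachFar_of_le {i n : ℕ} (h : n ≤ i) : M.supReachFar e i n = 1 :=
  maxHitProb_of_mem ⟨i, h, rfl⟩

theorem supReachFar_zero_of_pos (hterm : M.Absorbing (e 0)) (he : Injective e) {n : ℕ}
    (hn : 0 < n) : M.supReachFar e 0 n = 0 :=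
  ENNReal.iSup_eq_zero.2 <| hitProb_absorbing hterm fun ⟨m, hm, hme⟩ => by
    have := he hme
    omega

/-- The function `V` of the statement, as an extended real. -/
noncomputable def diagonalPotential (M : MDP S) (e : ℕ → S) (nseq : ℕ → ℕ) (s : S) : ℝ≥0∞ :=
  ∑' j, M.supReachFar e (invFun e s) (nseq j)

theorem diagonalPotential_ne_top (hbound : ∀ j, ∀ i ≤ j, M.supReachFar e i (nseq j) ≤ 2⁻¹ ^ j)
    (s : S) : M.diagonalPotential e nseq s ≠ ⊤ :=
  ENNReal.tsum_ne_top_of_le_two_inv_pow (fun _ => supReachFar_le_one _ _ _)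
    fun j hj => hbound j _ hj

theorem diagonalPotential_apply_zero (hterm : M.Absorbing (e 0)) (he : Injective e)
    (hpos : ∀ j, 0 < nseq j) : M.diagonalPotential e nseq (e 0) = 0 := by
  simp [diagonalPotential, leftInverse_invFun he 0, supReachFar_zero_of_pos hterm he (hpos _)]

theorem tsum_mul_diagonalPotential_le (hinv : ∀ s, M.Reach σ s → e (invFun e s) = s)
    (hs : M.Reach σ s) {μ : PMF S} (hμ : μ ∈ M.act s) :
    ∑' t, μ t * M.diagonalPotential e nseq t ≤ M.diagonalPotential e nseq s := by
  have hV : ∀ t, M.Reach σ t →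
      M.diagonalPotential e nseq t = ∑' j, M.maxHitProb t (e '' Set.Ici (nseq j)) := fun t ht => by
    simp only [diagonalPotential, supReachFar_eq_maxHitProb, hinv t ht]
  calc ∑' t, μ t * M.diagonalPotential e nseq t
      = ∑' t, μ t * ∑' j, M.maxHitProb t (e '' Set.Ici (nseq j)) := tsum_congr fun t => by
        by_cases ht : t ∈ μ.support
        · rw [hV t (hs.step μ hμ ht)]
        · simp [(μ.apply_eq_zero_iff t).2 ht]
    _ = ∑' j, ∑' t, μ t * M.maxHitProb t (e '' Set.Ici (nseq j)) := by
        simp_rw [← ENNReal.tsum_mul_left]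
        exact ENNReal.tsum_comm
    _ ≤ ∑' j, M.maxHitProb s (e '' Set.Ici (nseq j)) :=
        ENNReal.tsum_le_tsum fun j => tsum_mul_maxHitProb_le hμ _
    _ = M.diagonalPotential e nseq s := (hV s hs).symm

theorem supermartingaleOn_toReal {W : S → ℝ≥0∞} (hW : ∀ s, W s ≠ ⊤)
    (h : ∀ s, M.Reach σ s → ∀ μ ∈ M.act s, ∑' t, μ t * W t ≤ W s) :
    M.SupermartingaleOn σ fun s => (W s).toReal := by
  intro s hs μ hμ
  calc expect μ (fun s => (W s).toReal) = (∑' t, μ t * W t).toReal := by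
        rw [ENNReal.tsum_toReal_eq fun t => ENNReal.mul_ne_top (μ.apply_ne_top t) (hW t)]
        simp [expect, ENNReal.toReal_mul]
    _ ≤ (W s).toReal := ENNReal.toReal_mono (hW s) (h s hs μ hμ)

theorem le_diagonalPotential (hmono : Monotone nseq) {K : ℕ} (hK : nseq K ≤ invFun e s) :
    ((K + 1 : ℕ) : ℝ≥0∞) ≤ M.diagonalPotential e nseq s :=
  calc ((K + 1 : ℕ) : ℝ≥0∞)
      = ∑ j ∈ Finset.range (K + 1), M.supReachFar e (invFun e s) (nseq j) := by
        rw [Finset.sum_congr rfl fun j hj => supReachFar_of_le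
          ((hmono (Nat.lt_succ_iff.1 (Finset.mem_range.1 hj))).trans hK)]
        simp
    _ ≤ M.diagonalPotential e nseq s := ENNReal.sum_le_tsum _

theorem finite_setOf_reach_toReal_diagonalPotential_le
    (hinv : ∀ s, M.Reach σ s → e (invFun e s) = s) (hmono : Monotone nseq)
    (hfin : ∀ s, M.diagonalPotential e nseq s ≠ ⊤) (r : ℝ) :
    {s | M.Reach σ s ∧ (M.diagonalPotential e nseq s).toReal ≤ r}.Finite := by
  refine ((Set.finite_Iio (nseq ⌊r⌋₊)).image e).subset fun s ⟨hs, hr⟩ =>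
    ⟨invFun e s, ?_, hinv s hs⟩
  by_contra hK
  have := ENNReal.toReal_mono (hfin s) (le_diagonalPotential hmono (not_lt.1 hK))
  rw [ENNReal.toReal_natCast] at this
  push_cast at this
  linarith [Nat.lt_floor_add_one r]

end MDP

theorem diagonal_supermartingale_construction_general {S : Type} (M : MDP S)
    (term σ : S)
    (hterm : M.Absorbing term) (hAST : M.AST term σ)
    (e : ℕ → S) (he_mem : ∀ n, M.Reach σ (e n)) (he_inj : Function.Injective e)
    (he_surj : ∀ s, M.Reach σ s → ∃ n, e n = s) (he0 : e 0 = term) :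
    (∃ nseq : ℕ → ℕ, StrictMono nseq ∧ (∀ j, 0 < nseq j) ∧
        ∀ j, ∀ i ≤ j, M.supReachFar e i (nseq j) ≤ 2⁻¹ ^ j) ∧
    ∀ nseq : ℕ → ℕ, StrictMono nseq → (∀ j, 0 < nseq j) →
      (∀ j, ∀ i ≤ j, M.supReachFar e i (nseq j) ≤ 2⁻¹ ^ j) →
      (∀ s, M.Reach σ s →
        (∑' j : ℕ, M.supReachFar e (Function.invFun e s) (nseq j)) ≠ ⊤) ∧
      (∑' j : ℕ, M.supReachFar e (Function.invFun e term) (nseq j)).toReal = 0 ∧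
      M.SupermartingaleOn σ
        (fun s => (∑' j : ℕ, M.supReachFar e (Function.invFun e s) (nseq j)).toReal) ∧
      ∀ r : ℝ, {s | M.Reach σ s ∧
        (∑' j : ℕ, M.supReachFar e (Function.invFun e s) (nseq j)).toReal ≤ r}.Finite := by
  subst he0
  have hinv : ∀ s, M.Reach σ s → e (Function.invFun e s) = s := fun s hs =>
    Function.invFun_eq (he_surj s hs)
  refine ⟨exists_strictMono_pos_forall_le_two_inv_pow fun i =>
    MDP.tendsto_maxHitProb_image_Ici_atTop_zero hterm (hAST.of_reach hterm (he_mem i)) he_inj,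
    fun nseq hmono hpos hbound => ?_⟩
  have hfin := MDP.diagonalPotential_ne_top hbound
  refine ⟨fun s _ => hfin s, ?_, MDP.supermartingaleOn_toReal hfin
    fun s hs μ hμ => MDP.tsum_mul_diagonalPotential_le hinv hs hμ,
    MDP.finite_setOf_reach_toReal_diagonalPotential_le hinv hmono.monotone hfin⟩
  change (M.diagonalPotential e nseq (e 0)).toReal = 0
  rw [MDP.diagonalPotential_apply_zero hterm he_inj hpos, ENNReal.toReal_zero]

/-- **Diagonal supermartingale construction.** There is a strictly increasing sequence of
positive integers `(n_j)` with `R i (n_j) ≤ 2⁻ʲ` for all `i ≤ j`; and for any such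
sequence the function `V s = Σ_j R (e⁻¹ s) (n_j)` is well defined (the series converges at
every reachable state), vanishes at the terminal state, is a supermartingale function on
the reachable states, and has all its sublevel sets finite. -/
theorem diagonal_supermartingale_construction {S : Type} [Countable S] (M : MDP S)
    (term σ : S)
    (hterm : M.Absorbing term) (hAST : M.AST term σ)
    (hinf : {s | M.Reach σ s}.Infinite)
    (e : ℕ → S) (he_mem : ∀ n, M.Reach σ (e n)) (he_inj : Function.Injective e)
    (he_surj : ∀ s, M.Reach σ s → ∃ n, e n = s) (he0 : e 0 = term) :
    (∃ nseq : ℕ → ℕ, StrictMono nseq ∧ (∀ j, 0 < nseq j) ∧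
        ∀ j, ∀ i ≤ j, M.supReachFar e i (nseq j) ≤ 2⁻¹ ^ j) ∧
    ∀ nseq : ℕ → ℕ, StrictMono nseq → (∀ j, 0 < nseq j) →
      (∀ j, ∀ i ≤ j, M.supReachFar e i (nseq j) ≤ 2⁻¹ ^ j) →
      (∀ s, M.Reach σ s →
        (∑' j : ℕ, M.supReachFar e (Function.invFun e s) (nseq j)) ≠ ⊤) ∧
      (∑' j : ℕ, M.supReachFar e (Function.invFun e term) (nseq j)).toReal = 0 ∧
      M.SupermartingaleOn σ
        (fun s => (∑' j : ℕ, M.supReachFar e (Function.invFun e s) (nseq j)).toReal) ∧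
      ∀ r : ℝ, {s | M.Reach σ s ∧
        (∑' j : ℕ, M.supReachFar e (Function.invFun e s) (nseq j)).toReal ≤ r}.Finite :=
  diagonal_supermartingale_construction_general M term σ hterm hAST e he_mem he_inj he_surj he0
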